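/- arXiv:1605.07047 — 4 statements merged into one kernel-verified Lean document; each statement's English description precedes it below -/
import Mathlib

section
/- The function ξ : [0,∞) → ℝ defined by ξ(r) = 0 for 0 ≤ r ≤ 1; ξ(r) = (ln r - ⌊ln r⌋)/2^⌊log₂(⌊(ln r)/2⌋ + 1)⌋ if r ≥ 1 and ⌊ln r⌋ is even; and ξ(r) = (1 - (ln r - ⌊ln r⌋))/2^⌊log₂(⌊(ln r)/2⌋ + 1)⌋ if r ≥ 1 and ⌊ln r⌋ is odd, is continuous on [0,∞). -/
/-- The function ξ from the paper. -/
noncomputable def xi (r : ℝ) : ℝ :=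
  if r ≤ 1 then 0
  else
    if Even ⌊Real.log r⌋ then
      (Real.log r - (⌊Real.log r⌋ : ℝ)) /
        (2 : ℝ) ^ (⌊Real.logb 2 (((⌊Real.log r / 2⌋ + 1 : ℤ) : ℝ))⌋)
    else
      (1 - (Real.log r - (⌊Real.log r⌋ : ℝ))) /
        (2 : ℝ) ^ (⌊Real.logb 2 (((⌊Real.log r / 2⌋ + 1 : ℤ) : ℝ))⌋)

noncomputable def numer (t : ℝ) : ℝ := 2 * |Int.fract (t / 2 + 1 / 2) - 1 / 2|

noncomputable def den (t : ℝ) : ℝ :=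
  (2 : ℝ) ^ (⌊Real.logb 2 (((⌊t / 2⌋ + 1 : ℤ) : ℝ))⌋)

noncomputable def g (t : ℝ) : ℝ := if t ≤ 0 then 0 else numer t / den t

lemma numer_continuous : Continuous numer := by
  have h : Continuous (fun s : ℝ => 2 * |s - 1 / 2|) := by continuity
  have h2 : Continuous ((fun s : ℝ => 2 * |s - 1 / 2|) ∘ Int.fract) :=
    ContinuousOn.comp_fract'' (h.continuousOn) (by norm_num)
  have h3 : Continuous (fun t : ℝ => t / 2 + 1 / 2) := by continuity
  exact h2.comp h3

lemma numer_nonneg (t : ℝ) : 0 ≤ numer t := by unfold numer; positivity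

lemma den_pos (t : ℝ) : 0 < den t := by
  unfold den; positivity

lemma den_ge_one {t : ℝ} (ht : 0 ≤ t) : 1 ≤ den t := by
  unfold den
  apply one_le_zpow₀ one_le_two
  apply Int.le_floor.2
  simp only [Int.cast_zero]
  apply Real.logb_nonneg one_lt_two
  have : (0 : ℤ) ≤ ⌊t / 2⌋ := Int.floor_nonneg.2 (by linarith)
  have : (1 : ℤ) ≤ ⌊t / 2⌋ + 1 := by omega
  exact_mod_cast this

lemma key (t : ℝ) :
    (if Even ⌊t⌋ then Int.fract t else 1 - Int.fract t) = numer t := by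
  have hfl := Int.floor_le t
  have hfl' := Int.lt_floor_add_one t
  rcases Int.even_or_odd ⌊t⌋ with ⟨m, hm⟩ | ⟨m, hm⟩
  · rw [if_pos ⟨m, hm⟩]
    have h1 : Int.fract (t / 2 + 1 / 2) = t / 2 + 1 / 2 - m := by
      rw [Int.fract_eq_iff]
      refine ⟨by push_cast; rw [hm] at hfl; push_cast at hfl; linarith,
        by push_cast; rw [hm] at hfl'; push_cast at hfl'; linarith, ⟨m, by push_cast; ring⟩⟩
    rw [numer, h1, Int.fract, hm]
    rw [hm] at hfl hfl'
    push_cast at hfl hfl' ⊢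
    rw [abs_of_nonneg (by linarith)]
    ring
  · rw [if_neg (by simp [hm, Int.even_add_one, parity_simps])]
    have h1 : Int.fract (t / 2 + 1 / 2) = t / 2 + 1 / 2 - (m + 1) := by
      rw [Int.fract_eq_iff]
      refine ⟨by push_cast; rw [hm] at hfl; push_cast at hfl; linarith,
        by push_cast; rw [hm] at hfl'; push_cast at hfl'; linarith, ⟨m + 1, by push_cast; ring⟩⟩
    rw [numer, h1, Int.fract, hm]
    rw [hm] at hfl hfl'
    push_cast at hfl hfl' ⊢
    rw [abs_of_nonpos (by linarith)]
    ring

lemma g_nonneg (t : ℝ) : 0 ≤ g t := by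
  unfold g
  split
  · exact le_refl 0
  · exact div_nonneg (numer_nonneg t) (den_pos t).le

lemma g_le_numer (t : ℝ) : g t ≤ numer t := by
  unfold g
  split
  · exact numer_nonneg t
  · rename_i h
    push_neg at h
    calc numer t / den t ≤ numer t / 1 :=
          div_le_div_of_nonneg_left (numer_nonneg t) one_pos (den_ge_one h.le)
      _ = numer t := div_one _

lemma numer_even (k : ℤ) : numer (2 * (k:ℝ)) = 0 := by
  unfold numer
  rw [show (2:ℝ) * k / 2 + 1/2 = (k:ℝ) + 1/2 by ring, Int.fract_intCast_add,
    Int.fract_eq_self.2 ⟨by norm_num, by norm_num⟩]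
  norm_num

lemma g_continuous : Continuous g := by
  rw [continuous_iff_continuousAt]
  intro t₀
  rcases lt_trichotomy t₀ 0 with h0 | h0 | h0
  · -- locally zero
    have h : g =ᶠ[nhds t₀] fun _ => (0 : ℝ) := by
      filter_upwards [Iio_mem_nhds h0] with t ht
      simp [g, le_of_lt (Set.mem_Iio.mp ht)]
    exact h.continuousAt
  · -- t₀ = 0 : squeeze
    subst h0
    have hnum : Filter.Tendsto numer (nhds 0) (nhds 0) := by
      have h00 : numer 0 = 0 := by
        have := numer_even 0; norm_num at this; exact this
      have := numer_continuous.tendsto 0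
      rwa [h00] at this
    have hg0 : g 0 = 0 := by simp [g]
    rw [ContinuousAt, hg0]
    exact squeeze_zero g_nonneg g_le_numer hnum
  · -- t₀ > 0
    by_cases hev : ∃ k : ℤ, t₀ = 2 * k
    · -- even integer: squeeze
      obtain ⟨k, rfl⟩ := hev
      have hnum : numer (2 * k) = 0 := numer_even k
      have hnumt : Filter.Tendsto numer (nhds (2*k)) (nhds 0) := by
        rw [← hnum]; exact numer_continuous.tendsto _
      have hg0 : g (2*(k:ℝ)) = 0 := by
        unfold g; split
        · rfl
        · rw [hnum, zero_div]
      rw [ContinuousAt, hg0]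
      exact squeeze_zero g_nonneg g_le_numer hnumt
    · -- not an even integer: denominator locally constant
      push_neg at hev
      have hne : (2:ℝ) * ⌊t₀/2⌋ < t₀ := by
        rcases lt_or_eq_of_le (Int.floor_le (t₀/2)) with h | h
        · linarith
        · exact absurd (by linarith) (hev ⌊t₀/2⌋)
      have hlt : t₀ < 2 * (⌊t₀/2⌋ + 1) := by
        have := Int.lt_floor_add_one (t₀/2); push_cast; linarith
      have hmem : t₀ ∈ Set.Ioo ((2:ℝ) * ⌊t₀/2⌋) (2 * (⌊t₀/2⌋ + 1)) := ⟨hne, hlt⟩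
      have hopen : Set.Ioo ((2:ℝ) * ⌊t₀/2⌋) (2 * (⌊t₀/2⌋ + 1)) ∈ nhds t₀ :=
        Ioo_mem_nhds hne hlt
      have hfloor : ∀ t ∈ Set.Ioo ((2:ℝ) * ⌊t₀/2⌋) (2 * (⌊t₀/2⌋ + 1)), ⌊t/2⌋ = ⌊t₀/2⌋ := by
        intro t ht
        rw [Int.floor_eq_iff]
        constructor
        · push_cast; linarith [ht.1]
        · push_cast; linarith [ht.2]
      have hpos : ∀ t ∈ Set.Ioo ((2:ℝ) * ⌊t₀/2⌋) (2 * (⌊t₀/2⌋ + 1)), 0 < t := by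
        intro t ht
        have h1 : (0:ℤ) ≤ ⌊t₀/2⌋ := Int.floor_nonneg.2 (by linarith)
        have h2 : (0:ℝ) ≤ (⌊t₀/2⌋:ℝ) := by exact_mod_cast h1
        linarith [ht.1]
      have heq : g =ᶠ[nhds t₀] fun t => numer t / den t₀ := by
        filter_upwards [hopen] with t ht
        have h1 := hfloor t ht
        have h2 := hpos t ht
        simp only [g, if_neg (not_le.2 h2), den, h1]
      refine ContinuousAt.congr ?_ heq.symm
      exact (numer_continuous.continuousAt).div continuousAt_const (den_pos t₀).ne'

lemma xi_eq (r : ℝ) (hr : 0 < r) : xi r = g (Real.log r) := by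
  unfold xi g
  by_cases h : r ≤ 1
  · rw [if_pos h, if_pos (Real.log_nonpos hr.le h)]
  · have h1 : 1 < r := not_le.1 h
    have hl : 0 < Real.log r := Real.log_pos h1
    rw [if_neg h, if_neg (not_le.2 hl), ← key (Real.log r)]
    unfold den
    rw [Int.fract]
    split_ifs <;> push_cast <;> ring

/-- ξ is continuous on [0, ∞). -/
theorem xi_continuousOn : ContinuousOn xi (Set.Ici (0 : ℝ)) := by
  intro x hx
  rcases lt_or_ge x 1 with h | h
  · have hev : xi =ᶠ[nhdsWithin x (Set.Ici 0)] fun _ => (0:ℝ) := by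
      filter_upwards [nhdsWithin_le_nhds (Iio_mem_nhds h)] with t ht
      simp [xi, le_of_lt (Set.mem_Iio.mp ht)]
    exact (continuousWithinAt_const).congr_of_eventuallyEq hev (by simp [xi, h.le])
  · have hx0 : 0 < x := lt_of_lt_of_le one_pos h
    apply ContinuousAt.continuousWithinAt
    have hev : xi =ᶠ[nhds x] g ∘ Real.log := by
      filter_upwards [Ioi_mem_nhds hx0] with t ht
      exact xi_eq t (Set.mem_Ioi.mp ht)
    rw [continuousAt_congr hev]
    exact (g_continuous.continuousAt).comp (Real.continuousAt_log hx0.ne')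
end

section
/- Let ξ be the function from the previous context and define g : ℂ → ℂ by g(0) = 0 and g(w) = e² w e^{2πi ξ(|w|)} for w ≠ 0. Then g is a homeomorphism of ℂ with inverse g⁻¹(0) = 0 and g⁻¹(w) = e⁻² w e^{-2πi ξ(e⁻²|w|)} for w ≠ 0. -/
/-- g(w) = e² w e^{2πi ξ(|w|)} (note the formula gives g(0) = 0). -/
noncomputable def gMap (w : ℂ) : ℂ :=
  (Real.exp 2 : ℂ) * w * Complex.exp (2 * Real.pi * Complex.I * xi ‖w‖)

/-!
In the variable `t = log r`, ξ is a zigzag between 0 and 1 on the unit intervals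
`[n, n + 1]`, damped by the factor `2^(-⌊log₂ (n / 2 + 1)⌋)`. The factor only changes when `n`
passes from odd to even, where the zigzag is at 0, so the pieces glue to a continuous function.

The map g scales by `e²` and rotates by an angle depending only on `|w|`. Composing two such
radial twists adds their angle functions, so the twist at scale `e⁻²` by the angle `-ξ(e⁻² r)`
inverts g, and both twists are continuous because ξ is.
-/

open Set

theorem continuous_floor_fract_of_continuousOn {Y : Type*} [TopologicalSpace Y]
    {F : ℤ → ℝ → Y} (hF : ∀ n, ContinuousOn (F n) (Icc 0 1)) (hglue : ∀ n, F n 1 = F (n + 1) 0) :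
    Continuous fun t => F ⌊t⌋ (Int.fract t) := by
  have hfin : LocallyFinite fun n : ℤ => Icc (n : ℝ) (n + 1) :=
    locallyFinite_Icc_of_tendsto tendsto_intCast_atTop_atTop
      (Filter.tendsto_atBot_add_const_right _ _ (tendsto_intCast_atBot_iff.2 Filter.tendsto_id))
  refine hfin.continuous (iUnion_Icc_intCast ℝ) (fun _ => isClosed_Icc) fun n => ?_
  have hshift : ContinuousOn (fun s => F n (s - n)) (Icc (n : ℝ) (n + 1)) :=
    (hF n).comp (continuous_sub_right _).continuousOn fun s hs =>
      ⟨by linarith [hs.1], by linarith [hs.2]⟩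
  refine hshift.congr fun s hs => ?_
  rcases hs.2.lt_or_eq with hlt | rfl
  · have hfloor : ⌊s⌋ = n := Int.floor_eq_iff.2 ⟨hs.1, hlt⟩
    simp [Int.fract, hfloor]
  · simpa [Int.fract] using (hglue n).symm

noncomputable def xiPiece (n : ℤ) (x : ℝ) : ℝ :=
  (if Even n then x else 1 - x) / 2 ^ ⌊Real.logb 2 ((n / 2 + 1 : ℤ) : ℝ)⌋

theorem xiPiece_one (n : ℤ) : xiPiece n 1 = xiPiece (n + 1) 0 := by
  rcases Int.even_or_odd' n with ⟨k, rfl | rfl⟩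
  · have hodd : ¬Even (2 * k + 1) := Int.not_even_iff_odd.2 (odd_two_mul_add_one k)
    have hdiv : (2 * k + 1) / 2 = 2 * k / 2 := by omega
    simp [xiPiece, hodd, hdiv]
  · have heven : Even (2 * k + 1 + 1) := ⟨k + 1, by ring⟩
    simp [xiPiece, heven]

theorem xi_eq_xiPiece (r : ℝ) :
    xi r = xiPiece ⌊Real.log (max r 1)⌋ (Int.fract (Real.log (max r 1))) := by
  rcases le_or_gt r 1 with hr | hr
  · simp [xi, xiPiece, hr]
  · have hhalf : ⌊Real.log r / 2⌋ = ⌊Real.log r⌋ / 2 := by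
      simpa using Int.floor_div_natCast (Real.log r) 2
    simp only [xi, xiPiece, max_eq_left hr.le, not_le.2 hr, if_false, hhalf, Int.fract]
    split_ifs <;> rfl

theorem continuous_xi : Continuous xi := by
  have hlog : Continuous fun r : ℝ => Real.log (max r 1) :=
    Real.continuousOn_log.comp_continuous (continuous_id.max continuous_const)
      fun r => (zero_lt_one.trans_le (le_max_right r 1)).ne'
  have hpieces : ∀ n, ContinuousOn (xiPiece n) (Icc 0 1) := fun n => by
    unfold xiPiece; split_ifs <;> fun_prop
  rw [funext xi_eq_xiPiece]
  exact (continuous_floor_fract_of_continuousOn hpieces xiPiece_one).comp hlog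

noncomputable def radialTwist (a : ℝ) (φ : ℝ → ℝ) (w : ℂ) : ℂ :=
  (Real.exp a : ℂ) * w * Complex.exp (2 * Real.pi * Complex.I * φ ‖w‖)

theorem norm_radialTwist (a : ℝ) (φ : ℝ → ℝ) (w : ℂ) :
    ‖radialTwist a φ w‖ = Real.exp a * ‖w‖ := by
  simp [radialTwist, Complex.norm_exp]

theorem radialTwist_radialTwist (a b : ℝ) (φ ψ : ℝ → ℝ) (w : ℂ) :
    radialTwist b ψ (radialTwist a φ w) =
      radialTwist (a + b) (fun r => φ r + ψ (Real.exp a * r)) w := by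
  rw [radialTwist, norm_radialTwist]
  simp only [radialTwist, Real.exp_add, Complex.ofReal_mul, Complex.ofReal_add, mul_add,
    Complex.exp_add]
  ring

theorem radialTwist_zero_zero (w : ℂ) : radialTwist 0 (fun _ => 0) w = w := by
  simp [radialTwist]

theorem continuous_radialTwist (a : ℝ) {φ : ℝ → ℝ} (hφ : ContinuousOn φ (Ici 0)) :
    Continuous (radialTwist a φ) := by
  have hφnorm : Continuous fun w : ℂ => (φ ‖w‖ : ℂ) :=
    Complex.continuous_ofReal.comp <| hφ.comp_continuous continuous_norm fun w => norm_nonneg w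
  unfold radialTwist
  fun_prop

@[simps]
noncomputable def radialTwistHomeomorph (a : ℝ) (φ : ℝ → ℝ)
    (hφ : ContinuousOn φ (Ici 0)) : ℂ ≃ₜ ℂ where
  toFun := radialTwist a φ
  invFun := radialTwist (-a) fun r => -φ (Real.exp (-a) * r)
  left_inv w := by
    simp [radialTwist_radialTwist, ← mul_assoc, ← Real.exp_add, radialTwist_zero_zero]
  right_inv w := by
    simp [radialTwist_radialTwist, radialTwist_zero_zero]
  continuous_toFun := continuous_radialTwist a hφ
  continuous_invFun := continuous_radialTwist (-a) <|
    (hφ.comp (continuousOn_const.mul continuousOn_id) fun r hr =>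
      mul_nonneg (Real.exp_pos _).le hr).neg

theorem gMap_homeomorph :
    ∃ G : Homeomorph ℂ ℂ, (∀ w, G w = gMap w) ∧ G.symm 0 = 0 ∧
      ∀ w : ℂ, w ≠ 0 → G.symm w =
        (Real.exp (-2) : ℂ) * w *
          Complex.exp (-(2 * Real.pi * Complex.I) * xi (Real.exp (-2) * ‖w‖)) := by
  refine ⟨radialTwistHomeomorph 2 xi continuous_xi.continuousOn, fun w => rfl, ?_, fun w _ => ?_⟩
  · simp [radialTwist]
  · simp only [radialTwistHomeomorph_symm_apply, radialTwist, Complex.ofReal_neg, mul_neg,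
      neg_mul]
end

section
/- Let ξ be as defined and let w ∈ (1, e) be a positive real. Then for every natural number n, the (2ⁿ - 1)-th iterate of g(w) = e² w e^{2πi ξ(|w|)} satisfies g^{2ⁿ-1}(w) = e^{2(2ⁿ-1)} w e^{2πi n ln w}. -/
/-!
Since `ξ` is real, `g` multiplies the modulus by `e²` and only rotates the argument, so
`|g^k(w)| = e^{2k} w` and `g^m(w) = e^{2m} w e^{2πi Σ_{k<m} ξ(e^{2k} w)}`.
For `w ∈ (1, e)` the radius `e^{2k} w` has logarithm `2k + ln w` in the even band `[2k, 2k+1)`,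
where `ξ = ln w / 2^{⌊log₂(k+1)⌋}`. The indices `k` with `⌊log₂(k+1)⌋ = m` form a block of
`2^m` terms contributing `ln w` in total, and `k < 2ⁿ - 1` runs through exactly `n` blocks.
-/

open Real Finset

theorem sum_range_inv_two_pow_log (n : ℕ) :
    ∑ j ∈ range (2 ^ n - 1), ((2 : ℝ) ^ Nat.log 2 (j + 1))⁻¹ = n := by
  induction n with
  | zero => simp
  | succ n ih =>
    have hsucc : 2 ^ (n + 1) = 2 * 2 ^ n := by rw [pow_succ, mul_comm]
    have hblock : ∀ j ∈ Ico (2 ^ n - 1) (2 ^ (n + 1) - 1),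
        ((2 : ℝ) ^ Nat.log 2 (j + 1))⁻¹ = ((2 : ℝ) ^ n)⁻¹ := by
      intro j hj
      rw [mem_Ico] at hj
      rw [Nat.log_eq_of_pow_le_of_lt_pow (m := n) (by omega) (by omega)]
    rw [← sum_range_add_sum_Ico _ (by omega : 2 ^ n - 1 ≤ 2 ^ (n + 1) - 1), ih,
      sum_congr rfl hblock, sum_const, Nat.card_Ico,
      show 2 ^ (n + 1) - 1 - (2 ^ n - 1) = 2 ^ n by omega, nsmul_eq_mul]
    push_cast
    rw [mul_inv_cancel₀ (by positivity)]

theorem xi_exp_two_mul_add {t : ℝ} (ht₀ : 0 < t) (ht₁ : t < 1) (j : ℕ) :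
    xi (exp (2 * j + t)) = t / 2 ^ Nat.log 2 (j + 1) := by
  have hfloor : ⌊2 * (j : ℝ) + t⌋ = 2 * j := by
    rw [Int.floor_eq_iff]
    push_cast
    constructor <;> linarith
  have hfloor_half : ⌊(2 * (j : ℝ) + t) / 2⌋ = j := by
    rw [Int.floor_eq_iff, Int.cast_natCast]
    constructor <;> linarith
  have hlogb : ⌊logb 2 (((j : ℤ) + 1 : ℤ) : ℝ)⌋ = Nat.log 2 (j + 1) := by
    have h := floor_logb_natCast (b := 2) (r := ((j + 1 : ℕ) : ℝ)) (by positivity)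
    rw [Int.log_natCast] at h
    push_cast at h ⊢
    exact h
  have hgt : ¬ exp (2 * j + t) ≤ 1 := by
    rw [not_le, one_lt_exp_iff]
    positivity
  rw [xi, if_neg hgt, log_exp, hfloor, if_pos (even_two_mul _), hfloor_half, hlogb,
    zpow_natCast]
  push_cast
  ring

theorem sum_range_xi_exp_two_mul_mul {w : ℝ} (hw : w ∈ Set.Ioo 1 (exp 1)) (n : ℕ) :
    ∑ j ∈ range (2 ^ n - 1), xi (exp (2 * j) * w) = n * log w := by
  have hw₀ : 0 < w := one_pos.trans hw.1
  have hlog₀ : 0 < log w := log_pos hw.1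
  have hlog₁ : log w < 1 := by simpa using log_lt_log hw₀ hw.2
  calc ∑ j ∈ range (2 ^ n - 1), xi (exp (2 * j) * w)
      = ∑ j ∈ range (2 ^ n - 1), log w * ((2 : ℝ) ^ Nat.log 2 (j + 1))⁻¹ := by
        refine sum_congr rfl fun j _ => ?_
        rw [← exp_log hw₀, ← exp_add, xi_exp_two_mul_add hlog₀ hlog₁, div_eq_mul_inv, log_exp]
    _ = n * log w := by rw [← mul_sum, sum_range_inv_two_pow_log, mul_comm]

theorem gMap_ofReal_mul_exp {r : ℝ} (hr : 0 ≤ r) (θ : ℝ) :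
    gMap (r * Complex.exp (2 * π * Complex.I * θ)) =
      (exp 2 * r : ℝ) * Complex.exp (2 * π * Complex.I * (θ + xi r : ℝ)) := by
  have hnorm : ‖(r : ℂ) * Complex.exp (2 * π * Complex.I * θ)‖ = r := by
    rw [norm_mul, Complex.norm_real, norm_of_nonneg hr,
      show 2 * π * Complex.I * θ = (2 * π * θ : ℝ) * Complex.I by push_cast; ring,
      Complex.norm_exp_ofReal_mul_I, mul_one]
  rw [gMap, hnorm]
  push_cast
  rw [mul_add, Complex.exp_add]
  ring

theorem gMap_iterate_ofReal {w : ℝ} (hw : 0 ≤ w) (m : ℕ) :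
    gMap^[m] w = (exp (2 * m) * w : ℝ) *
      Complex.exp (2 * π * Complex.I * (∑ j ∈ range m, xi (exp (2 * j) * w) : ℝ)) := by
  induction m with
  | zero => simp
  | succ m ih =>
    rw [Function.iterate_succ_apply', ih, gMap_ofReal_mul_exp (by positivity), sum_range_succ]
    congr 2
    rw [Nat.cast_succ, mul_add_one, exp_add]
    ring

theorem gMap_iterate_pow_two_sub_one (w : ℝ) (hw : w ∈ Set.Ioo 1 (Real.exp 1)) (n : ℕ) :
    gMap^[2 ^ n - 1] (w : ℂ) =
      (Real.exp (2 * (2 ^ n - 1 : ℕ)) : ℂ) * (w : ℂ) *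
        Complex.exp (2 * Real.pi * Complex.I * ((n : ℝ) * Real.log w)) := by
  rw [gMap_iterate_ofReal (one_pos.trans hw.1).le, sum_range_xi_exp_two_mul_mul hw]
  push_cast
  rfl
end

section
/- For the homeomorphism f of the closed unit disk (f = h⁻¹∘g∘h on the open disk, identity on the boundary), the backward orbit of every point z with |z| < 1 converges to 0: lim_{n→∞} f⁻ⁿ(z) = 0, while f⁻ⁿ(z) = z for |z| = 1. -/
/-- The map f from the paper, as a map of ℂ (it preserves the closed unit disk). -/
noncomputable def fMap (z : ℂ) : ℂ :=
  if ‖z‖ = 0 ∨ ‖z‖ = 1 then z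
  else (Real.exp 2 : ℂ) * z / ((Real.exp 2 * ‖z‖ - ‖z‖ + 1 : ℝ) : ℂ) *
    Complex.exp (2 * Real.pi * Complex.I * xi (‖z‖ / (1 - ‖z‖)))

/-!
Radially, `h` is `r ↦ r / (1 - r)` and `f` is `h⁻¹ ∘ (e² ·) ∘ h`, the angular factor of `f`
having modulus one. Hence `h` conjugates the backward orbit of a point of the open disk to a
radial contraction by `e⁻²`, so `|f⁻ⁿ z| ≤ |h (f⁻ⁿ z)| = e^{-2n} |h z| → 0`. The boundary
circle is fixed pointwise by `f`, hence by `f⁻¹`.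
-/

local notation "𝔻" => {z : ℂ // ‖z‖ ≤ 1}

/-- `‖h z‖ = radialH ‖z‖` for the homeomorphism `h z = z / (1 - ‖z‖)` of the open disk onto `ℂ`. -/
noncomputable def radialH (r : ℝ) : ℝ := r / (1 - r)

lemma le_radialH {r : ℝ} (hr0 : 0 ≤ r) (hr1 : r < 1) : r ≤ radialH r :=
  le_div_self hr0 (by linarith) (by linarith)

section RadialConjugate

variable {a r : ℝ}

lemma radial_denom_pos (ha : 0 < a) (hr0 : 0 ≤ r) (hr1 : r < 1) : 0 < a * r - r + 1 := by
  nlinarith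

-- `r ↦ a r / (a r - r + 1)` is the radial map `h⁻¹ ∘ (a ·) ∘ h`.
lemma radial_conj_lt_one (ha : 0 < a) (hr0 : 0 ≤ r) (hr1 : r < 1) :
    a * r / (a * r - r + 1) < 1 := by
  rw [div_lt_one (radial_denom_pos ha hr0 hr1)]
  linarith

lemma radialH_radial_conj (ha : 0 < a) (hr0 : 0 ≤ r) (hr1 : r < 1) :
    radialH (a * r / (a * r - r + 1)) = a * radialH r := by
  have hD := radial_denom_pos ha hr0 hr1
  have h1s : 1 - a * r / (a * r - r + 1) = (1 - r) / (a * r - r + 1) := by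
    rw [eq_div_iff hD.ne', sub_mul, div_mul_cancel₀ _ hD.ne']
    ring
  rw [radialH, h1s, div_div_div_cancel_right₀ hD.ne', radialH, mul_div_assoc]

end RadialConjugate

lemma norm_exp_two_pi_I_mul (x : ℝ) : ‖Complex.exp (2 * Real.pi * Complex.I * x)‖ = 1 := by
  rw [show 2 * Real.pi * Complex.I * x = ((2 * Real.pi * x : ℝ) : ℂ) * Complex.I by push_cast; ring,
    Complex.norm_exp_ofReal_mul_I]

lemma fMap_of_norm_eq_one {z : ℂ} (hz : ‖z‖ = 1) : fMap z = z := by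
  simp [fMap, hz]

lemma norm_fMap {z : ℂ} (hz : ‖z‖ ≠ 1) :
    ‖fMap z‖ = Real.exp 2 * ‖z‖ / (Real.exp 2 * ‖z‖ - ‖z‖ + 1) := by
  by_cases h0 : ‖z‖ = 0
  · simp [fMap, h0]
  have hD : 0 < Real.exp 2 * ‖z‖ - ‖z‖ + 1 := by
    nlinarith [Real.add_one_le_exp (2 : ℝ), norm_nonneg z]
  rw [fMap, if_neg (not_or.mpr ⟨h0, hz⟩), norm_mul, norm_exp_two_pi_I_mul, mul_one, norm_div,
    norm_mul, Complex.norm_real, Complex.norm_real, Real.norm_of_nonneg (Real.exp_pos 2).le,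
    Real.norm_of_nonneg hD.le]

lemma norm_fMap_lt_one {z : ℂ} (hz : ‖z‖ < 1) : ‖fMap z‖ < 1 := by
  rw [norm_fMap hz.ne]
  exact radial_conj_lt_one (Real.exp_pos 2) (norm_nonneg z) hz

lemma radialH_norm_fMap {z : ℂ} (hz : ‖z‖ < 1) :
    radialH ‖fMap z‖ = Real.exp 2 * radialH ‖z‖ := by
  rw [norm_fMap hz.ne]
  exact radialH_radial_conj (Real.exp_pos 2) (norm_nonneg z) hz

lemma norm_lt_one_of_norm_fMap_lt_one {z : ℂ} (hz : ‖z‖ ≤ 1) (h : ‖fMap z‖ < 1) : ‖z‖ < 1 :=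
  hz.lt_of_ne fun h1 => h.ne (by rwa [fMap_of_norm_eq_one h1])

section BackwardOrbit

variable {F : 𝔻 ≃ₜ 𝔻}

lemma fMap_symm_apply (hF : ∀ z : 𝔻, (F z : ℂ) = fMap (z : ℂ)) (w : 𝔻) :
    fMap (F.symm w : ℂ) = w := by
  rw [← hF, F.apply_symm_apply]

lemma backward_orbit_radialH (hF : ∀ z : 𝔻, (F z : ℂ) = fMap (z : ℂ)) {z : 𝔻}
    (hz : ‖(z : ℂ)‖ < 1) (n : ℕ) :
    ‖(F.symm^[n] z : ℂ)‖ < 1 ∧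
      radialH ‖(F.symm^[n] z : ℂ)‖ = Real.exp (-2) ^ n * radialH ‖(z : ℂ)‖ := by
  induction n with
  | zero => simpa using hz
  | succ n ih =>
    obtain ⟨hlt, hrad⟩ := ih
    rw [Function.iterate_succ_apply']
    set w := F.symm^[n] z
    have hfw : fMap (F.symm w : ℂ) = w := fMap_symm_apply hF w
    have hlt' : ‖(F.symm w : ℂ)‖ < 1 :=
      norm_lt_one_of_norm_fMap_lt_one (F.symm w).2 (hfw ▸ hlt)
    have hstep := radialH_norm_fMap hlt'
    rw [hfw, hrad] at hstep
    refine ⟨hlt', ?_⟩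
    rw [pow_succ, mul_right_comm, hstep, mul_right_comm, ← Real.exp_add]
    norm_num

end BackwardOrbit

theorem fMap_backward_orbit (F : Homeomorph {z : ℂ // ‖z‖ ≤ 1} {z : ℂ // ‖z‖ ≤ 1})
    (hF : ∀ z : {z : ℂ // ‖z‖ ≤ 1}, (F z : ℂ) = fMap (z : ℂ)) :
    (∀ z : {z : ℂ // ‖z‖ ≤ 1}, ‖(z : ℂ)‖ < 1 →
        Filter.Tendsto (fun n : ℕ => ((F.symm^[n] z : {z : ℂ // ‖z‖ ≤ 1}) : ℂ))
          Filter.atTop (nhds 0)) ∧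
    (∀ z : {z : ℂ // ‖z‖ ≤ 1}, ‖(z : ℂ)‖ = 1 →
        ∀ n : ℕ, F.symm^[n] z = z) := by
  refine ⟨fun z hz => ?_, fun z hz => Function.iterate_fixed ?_⟩
  · have hbound (n : ℕ) : ‖(F.symm^[n] z : ℂ)‖ ≤ Real.exp (-2) ^ n * radialH ‖(z : ℂ)‖ := by
      obtain ⟨hlt, hrad⟩ := backward_orbit_radialH hF hz n
      exact hrad ▸ le_radialH (norm_nonneg _) hlt
    have hexp : Real.exp (-2) < 1 := Real.exp_lt_one_iff.mpr (by norm_num)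
    refine squeeze_zero_norm hbound ?_
    simpa using (tendsto_pow_atTop_nhds_zero_of_lt_one (Real.exp_pos _).le hexp).mul_const
      (radialH ‖(z : ℂ)‖)
  · rw [F.symm_apply_eq]
    exact Subtype.ext (by rw [hF, fMap_of_norm_eq_one hz])
end
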